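/- arXiv:1801.00525 — 5 statements merged into one kernel-verified Lean document; each statement's English description precedes it below -/
import Mathlib

section
/- Let Δ be a lower saturated subset of ℝ≥0^n. Then the boundary of Δ (the closure of Δ minus the interior of Δ) has Lebesgue measure zero. In particular, Δ is Lebesgue measurable. -/
/-- A subset of `ℝ≥0^n` is lower saturated if it contains the origin and contains the
full coordinate box `[0,ξ₁] × ⋯ × [0,ξₙ]` below each of its points. -/
def lowerSat {n : ℕ} (Δ : Set (Fin n → ℝ)) : Prop :=
  (fun _ => (0 : ℝ)) ∈ Δ ∧ ∀ φ ∈ Δ, ∀ ξ : Fin n → ℝ, (∀ i, 0 ≤ ξ i ∧ ξ i ≤ φ i) → ξ ∈ Δ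

/-- A subset of `ℤ≥0^n` is lower `ℤ≥0`-saturated if it contains the origin and is
downward closed for the componentwise order. -/
def lowerSatZ {n : ℕ} (S : Set (Fin n → ℕ)) : Prop :=
  (fun _ => 0) ∈ S ∧ ∀ γ ∈ S, ∀ δ : Fin n → ℕ, (∀ i, δ i ≤ γ i) → δ ∈ S

/-- `Δ(Σ) = ⋃_{γ ∈ Σ} [0,γ₁] × ⋯ × [0,γₙ]`. -/
def DeltaOf {n : ℕ} (S : Set (Fin n → ℕ)) : Set (Fin n → ℝ) :=
  {ξ | ∃ γ ∈ S, ∀ i, 0 ≤ ξ i ∧ ξ i ≤ (γ i : ℝ)}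

/-- `Δ'(Σ) = ⋃_{γ ∈ Σ} [γ₁,γ₁+1) × ⋯ × [γₙ,γₙ+1)`. -/
def Delta'Of {n : ℕ} (S : Set (Fin n → ℕ)) : Set (Fin n → ℝ) :=
  {ξ | ∃ γ ∈ S, ∀ i, (γ i : ℝ) ≤ ξ i ∧ ξ i < (γ i : ℝ) + 1}

/-! `Δ` is order-connected: if `φ ≤ ξ ≤ ψ` with `φ, ψ ∈ Δ`, then `0 ≤ ξ ≤ ψ`, so `ξ` lies in the
box below `ψ`. An order-connected subset of `ℝⁿ` is the intersection of an upper and a lower set,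
whose frontiers are null by the Lebesgue density theorem; a set with null frontier is a.e. equal
to its interior, hence null measurable. -/

theorem lowerSat.ordConnected {n : ℕ} {Δ : Set (Fin n → ℝ)} (hΔ : lowerSat Δ)
    (hΔpos : ∀ ξ ∈ Δ, ∀ i, 0 ≤ ξ i) : Δ.OrdConnected :=
  Set.ordConnected_iff.2 fun φ hφ ψ hψ _ ξ ⟨hφξ, hξψ⟩ ↦
    hΔ.2 ψ hψ ξ fun i ↦ ⟨(hΔpos φ hφ i).trans (hφξ i), hξψ i⟩

/-- A lower saturated subset `Δ` of `ℝ≥0^n` has topological boundary of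
Lebesgue measure zero; in particular `Δ` is Lebesgue measurable (null measurable for the
Borel volume, hence measurable for the completed Lebesgue measure). -/
theorem stmt3 (n : ℕ) (Δ : Set (Fin n → ℝ)) (hΔ : lowerSat Δ)
    (hΔpos : ∀ ξ ∈ Δ, ∀ i, 0 ≤ ξ i) :
    MeasureTheory.volume (closure Δ \ interior Δ) = 0 ∧
    MeasureTheory.NullMeasurableSet Δ MeasureTheory.volume :=
  ⟨(hΔ.ordConnected hΔpos).null_frontier, (hΔ.ordConnected hΔpos).nullMeasurableSet⟩
end

section
/- Let k be a field of characteristic zero, A = k[X₁,...,Xₙ], 𝔪 a maximal ideal of A with residue field k (i.e., A/𝔪 ≅ k), so 𝔪 = (X₁−a₁,...,Xₙ−aₙ) for some aᵢ ∈ k. Let 𝔍 be an ideal with √𝔍 = 𝔪, and let Σ be a lower ℤ≥0-saturated subset of ℤ≥0^n such that ∂_γ(𝔍) ⊆ 𝔪 for all γ ∈ Σ. Then dim_k(A/𝔍) ≥ #Σ. -/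
/-- The normalized (Hasse) differential operator
`∂_γ = (1/(γ₁!⋯γₙ!)) ∂^{|γ|}/∂X₁^{γ₁}⋯∂Xₙ^{γₙ}` on `k[X₁,…,Xₙ]`. -/
noncomputable def nPD {k : Type*} [Field k] {n : ℕ} (γ : Fin n → ℕ)
    (f : MvPolynomial (Fin n) k) : MvPolynomial (Fin n) k :=
  ((∏ i, (γ i).factorial : ℕ) : k)⁻¹ •
    (List.finRange n).foldr (fun i g => (fun h => MvPolynomial.pderiv i h)^[γ i] g) f

/-- A set of exponents (as finitely supported functions) is lower `ℤ≥0`-saturated if it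
contains `0` and is downward closed componentwise. -/
def lowerSatF {n : ℕ} (S : Set (Fin n →₀ ℕ)) : Prop :=
  0 ∈ S ∧ ∀ γ ∈ S, ∀ δ : Fin n →₀ ℕ, δ ≤ γ → δ ∈ S

open MvPolynomial

section Aux

variable {k : Type*} [Field k] {n : ℕ}

/-- The shifted monomial `∏ (Xᵢ - aᵢ)^{γᵢ}`. -/
private noncomputable def Fb (a : Fin n → k) (γ : Fin n → ℕ) : MvPolynomial (Fin n) k :=
  ∏ i, (X i - C (a i)) ^ (γ i)

private lemma pderiv_factor_ne (j i : Fin n) (c : k) (e : ℕ) (h : i ≠ j) :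
    pderiv j ((X i - C c) ^ e : MvPolynomial (Fin n) k) = 0 := by
  rw [Derivation.leibniz_pow]
  simp [pderiv_X, Pi.single_apply, h]

private lemma pderiv_prod_erase (a : Fin n → k) (γ : Fin n → ℕ) (j : Fin n)
    (s : Finset (Fin n)) (hj : j ∉ s) :
    pderiv j (∏ i ∈ s, ((X i - C (a i)) ^ (γ i) : MvPolynomial (Fin n) k)) = 0 := by
  classical
  induction s using Finset.induction_on with
  | empty => simp
  | @insert i s hi ih =>
      rw [Finset.prod_insert hi, Derivation.leibniz,
        ih (fun h => hj (Finset.mem_insert_of_mem h)),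
        pderiv_factor_ne j i (a i) (γ i) (fun h => hj (h ▸ Finset.mem_insert_self i s))]
      simp

private lemma pderivA (a : Fin n → k) (γ : Fin n → ℕ) (j : Fin n) :
    pderiv j (Fb a γ) = (γ j) • Fb a (Function.update γ j (γ j - 1)) := by
  classical
  have h1 : Fb a γ = (X j - C (a j)) ^ (γ j)
      * ∏ i ∈ Finset.univ.erase j, ((X i - C (a i)) ^ (γ i) : MvPolynomial (Fin n) k) := by
    rw [Fb, ← Finset.mul_prod_erase _ _ (Finset.mem_univ j)]
  have h2 : Fb a (Function.update γ j (γ j - 1)) = (X j - C (a j)) ^ (γ j - 1)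
      * ∏ i ∈ Finset.univ.erase j, ((X i - C (a i)) ^ (γ i) : MvPolynomial (Fin n) k) := by
    rw [Fb, ← Finset.mul_prod_erase _ _ (Finset.mem_univ j), Function.update_self]
    congr 1
    exact Finset.prod_congr rfl fun i hi => by
      rw [Function.update_of_ne (Finset.ne_of_mem_erase hi)]
  have hd : pderiv j ((X j - C (a j) : MvPolynomial (Fin n) k)) = 1 := by
    simp [pderiv_X, Pi.single_eq_same]
  rw [h1, h2, Derivation.leibniz, pderiv_prod_erase a γ j _ (Finset.notMem_erase j _),
    Derivation.leibniz_pow, hd]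
  simp only [smul_zero, zero_add, smul_eq_mul, nsmul_eq_mul, mul_one]
  ring

private lemma pderivB (a : Fin n → k) (γ : Fin n → ℕ) (j : Fin n) (e : ℕ) :
    (fun h => pderiv j h)^[e] (Fb a γ) =
      ((γ j).descFactorial e) • Fb a (Function.update γ j (γ j - e)) := by
  induction e with
  | zero => simp [Function.update_eq_self]
  | succ e ih =>
      rw [Function.iterate_succ_apply', ih, map_nsmul, pderivA]
      simp only [Function.update_self, Function.update_idem, Nat.sub_sub]
      rw [Nat.descFactorial_succ, mul_comm, mul_smul]

private lemma iter_nsmul (j : Fin n) (e m : ℕ) (f : MvPolynomial (Fin n) k) :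
    (fun h => pderiv j h)^[e] (m • f) = m • (fun h => pderiv j h)^[e] f := by
  induction e generalizing f with
  | zero => rfl
  | succ e ih => simp only [Function.iterate_succ_apply, map_nsmul, ih]

private lemma foldrC (a : Fin n → k) (δ γ : Fin n → ℕ) :
    ∀ l : List (Fin n), l.Nodup →
      l.foldr (fun i g => (fun h => pderiv i h)^[δ i] g) (Fb a γ) =
        ((l.map fun i => (γ i).descFactorial (δ i)).prod) •
          Fb a (fun i => if i ∈ l then γ i - δ i else γ i) := by
  intro l
  induction l with
  | nil => intro _; simp
  | cons i t ih =>
      intro hnd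
      rw [List.nodup_cons] at hnd
      have hupd : Function.update (fun i0 => if i0 ∈ t then γ i0 - δ i0 else γ i0) i
          (γ i - δ i) = fun i0 => if i0 ∈ i :: t then γ i0 - δ i0 else γ i0 := by
        funext i0
        rcases eq_or_ne i0 i with rfl | h
        · simp
        · simp [Function.update_of_ne h, List.mem_cons, h]
      have hti : (if i ∈ t then γ i - δ i else γ i) = γ i := if_neg hnd.1
      rw [List.foldr_cons, ih hnd.2, iter_nsmul, pderivB, hti, hupd,
        List.map_cons, List.prod_cons, mul_comm, mul_smul]

private lemma nPD_Fb (a : Fin n → k) (δ γ : Fin n → ℕ) :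
    nPD δ (Fb a γ) = ((∏ i, (δ i).factorial : ℕ) : k)⁻¹ •
      ((∏ i, (γ i).descFactorial (δ i)) • Fb a (fun i => γ i - δ i)) := by
  rw [nPD, foldrC a δ γ _ (List.nodup_finRange n), ← Fin.prod_univ_def]
  simp [List.mem_finRange]

private lemma aeval_Fb (a : Fin n → k) (β : Fin n → ℕ) :
    aeval a (Fb a β) = ∏ i, (0 : k) ^ (β i) := by
  rw [Fb, map_prod]
  exact Finset.prod_congr rfl fun i _ => by simp

private lemma eval_nPD_Fb [CharZero k] (a : Fin n → k) (δ γ : Fin n → ℕ) :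
    aeval a (nPD δ (Fb a γ)) = if γ = δ then 1 else 0 := by
  rw [nPD_Fb, map_smul, map_nsmul, aeval_Fb]
  split_ifs with h
  · subst h
    have hc : ((∏ i, (γ i).factorial : ℕ) : k) ≠ 0 :=
      Nat.cast_ne_zero.mpr (Finset.prod_ne_zero_iff.mpr fun i _ => Nat.factorial_ne_zero _)
    have hc' : (∏ i : Fin n, ((γ i).factorial : k)) ≠ 0 := by push_cast at hc; exact hc
    simp [Nat.descFactorial_self, smul_eq_mul, nsmul_eq_mul, inv_mul_cancel₀ hc']
  · obtain ⟨i, hi⟩ := Function.ne_iff.mp h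
    rcases lt_or_gt_of_ne hi with hlt | hgt
    · have : (∏ i, (γ i).descFactorial (δ i)) = 0 :=
        Finset.prod_eq_zero (Finset.mem_univ i) (Nat.descFactorial_eq_zero_iff_lt.mpr hlt)
      rw [this, zero_smul, smul_zero]
    · have : (∏ i, (0 : k) ^ (γ i - δ i)) = 0 :=
        Finset.prod_eq_zero (Finset.mem_univ i) (zero_pow (Nat.sub_ne_zero_of_lt hgt))
      rw [this, smul_zero, smul_zero]

/-- The operator in `nPD` packaged as a linear endomorphism. -/
private noncomputable def Lf (a : Fin n → k) (δ : Fin n → ℕ) :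
    MvPolynomial (Fin n) k →ₗ[k] k :=
  ((∏ i, (δ i).factorial : ℕ) : k)⁻¹ •
    ((aeval a : MvPolynomial (Fin n) k →ₐ[k] k).toLinearMap ∘ₗ
      ((List.finRange n).foldr (fun i T => ((pderiv i).toLinearMap ^ (δ i)) * T)
        (1 : Module.End k (MvPolynomial (Fin n) k))))

private lemma foldr_eq_end (δ : Fin n → ℕ) (f : MvPolynomial (Fin n) k) (l : List (Fin n)) :
    l.foldr (fun i g => (fun h => pderiv i h)^[δ i] g) f =
      (l.foldr (fun i T => ((pderiv i).toLinearMap ^ (δ i)) * T)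
        (1 : Module.End k (MvPolynomial (Fin n) k))) f := by
  induction l with
  | nil => rfl
  | cons i t ih =>
      rw [List.foldr_cons, List.foldr_cons, ih, Module.End.mul_apply, Module.End.pow_apply]
      rfl

private lemma Lf_apply (a : Fin n → k) (δ : Fin n → ℕ) (f : MvPolynomial (Fin n) k) :
    Lf a δ f = aeval a (nPD δ f) := by
  rw [nPD, foldr_eq_end, map_smul]
  rfl

end Aux

/-- Let `𝔪 = (X₁−a₁,…,Xₙ−aₙ)` be a maximal ideal of `A = k[X₁,…,Xₙ]`
(char k = 0) with residue field `k`, `𝔍` an ideal with `√𝔍 = 𝔪`, and `Σ` a lower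
`ℤ≥0`-saturated set of exponents with `∂_γ(𝔍) ⊆ 𝔪` for all `γ ∈ Σ`. Then
`dim_k(A/𝔍) ≥ #Σ`. -/
theorem stmt7 {k : Type*} [Field k] [CharZero k] {n : ℕ}
    (m J : Ideal (MvPolynomial (Fin n) k)) (hm : m.IsMaximal) (a : Fin n → k)
    (hma : m = Ideal.span (Set.range fun i => MvPolynomial.X i - MvPolynomial.C (a i)))
    (hrad : J.radical = m)
    (S : Set (Fin n →₀ ℕ)) (hS : lowerSatF S)
    (hD : ∀ γ ∈ S, ∀ f ∈ J, nPD ⇑γ f ∈ m) :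
    Cardinal.lift.{u_1} (Cardinal.mk S) ≤ Cardinal.lift.{0} (Module.rank k (MvPolynomial (Fin n) k ⧸ J)) := by
  classical
  have hmker : m ≤ RingHom.ker
      ((aeval a : MvPolynomial (Fin n) k →ₐ[k] k) : MvPolynomial (Fin n) k →+* k) := by
    rw [hma, Ideal.span_le]
    rintro _ ⟨i, rfl⟩
    simp [RingHom.mem_ker]
  have hLI : LinearIndependent k
      fun σ : S => Ideal.Quotient.mk J (Fb a ⇑(σ : Fin n →₀ ℕ)) := by
    rw [linearIndependent_iff']
    intro s g hsum σ hσ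
    have hp : (∑ τ ∈ s, g τ • Fb a ⇑(τ : Fin n →₀ ℕ)) ∈ J := by
      rw [← Ideal.Quotient.eq_zero_iff_mem, ← Ideal.Quotient.mkₐ_eq_mk k, map_sum]
      simp_rw [map_smul, Ideal.Quotient.mkₐ_eq_mk k]
      exact hsum
    have h0 : Lf a ⇑(σ : Fin n →₀ ℕ) (∑ τ ∈ s, g τ • Fb a ⇑(τ : Fin n →₀ ℕ)) = 0 := by
      rw [Lf_apply]
      exact hmker (hD _ σ.2 _ hp)
    have h1 : Lf a ⇑(σ : Fin n →₀ ℕ) (∑ τ ∈ s, g τ • Fb a ⇑(τ : Fin n →₀ ℕ)) = g σ := by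
      rw [map_sum]
      simp_rw [map_smul, Lf_apply, eval_nPD_Fb]
      rw [Finset.sum_eq_single σ]
      · simp
      · intro τ _ hne
        have hc : ⇑(τ : Fin n →₀ ℕ) ≠ ⇑(σ : Fin n →₀ ℕ) :=
          fun h => hne (Subtype.ext (DFunLike.coe_injective h))
        simp [hc]
      · intro h; exact absurd hσ h
    rw [h0] at h1
    exact h1.symm
  exact hLI.cardinal_lift_le_rank
end

section
/- Let k be a field of characteristic zero with algebraic closure k̄, A = k[X₁,...,Xₙ], A_{k̄} = k̄[X₁,...,Xₙ]. Let 𝔪₁,...,𝔪_r be distinct maximal ideals of A_{k̄} and 𝔍₁,...,𝔍_r ideals with √𝔍ᵢ = 𝔪ᵢ. Let Σ be a lower ℤ≥0-saturated subset of ℤ≥0^n such that ∂_γ(𝔍₁⋯𝔍_r) ⊆ 𝔪₁⋯𝔪_r for all γ ∈ Σ. Then for each i and each γ ∈ Σ, ∂_γ(𝔍ᵢ) ⊆ 𝔪ᵢ. -/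
/-!
Fix `i` and pick `g ∈ ∏_{j ≠ i} 𝔍ⱼ` with `g ∉ 𝔪ᵢ`; this is possible because `𝔪ᵢ` is prime and
`𝔍ⱼ ⊄ 𝔪ᵢ` for `j ≠ i` (otherwise `𝔪ⱼ = √𝔍ⱼ ⊆ 𝔪ᵢ`). For `f ∈ 𝔍ᵢ` we have `f g ∈ 𝔍₁⋯𝔍_r`, so
`∂_δ(f g) ∈ 𝔪ᵢ` for all `δ ≤ γ ∈ Σ`. By the Leibniz rule, `∂_γ(f g) ≡ ∂_γ f · g` modulo the ideal
generated by the `∂_δ f` with `δ < γ`, which lies in `𝔪ᵢ` by induction on `γ`. Since `g ∉ 𝔪ᵢ`,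
`∂_γ f ∈ 𝔪ᵢ`.
-/

open MvPolynomial

theorem Finsupp.induction_add_single_one {α : Type*} {p : (α →₀ ℕ) → Prop} (zero : p 0)
    (add_single : ∀ γ i, p γ → p (γ + single i 1)) (γ : α →₀ ℕ) : p γ := by
  classical
  obtain ⟨s, rfl⟩ := Multiset.toFinsupp.surjective γ
  induction s using Multiset.induction with
  | empty => simpa using zero
  | cons a s ih =>
    rw [← Multiset.singleton_add, add_comm, Multiset.toFinsupp_add, Multiset.toFinsupp_singleton]
    exact add_single _ a ih

namespace MvPolynomial

variable {R σ : Type*} [CommSemiring R]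

theorem commute_pderiv (i j : σ) :
    Function.Commute (pderiv i : MvPolynomial σ R → _) (pderiv j) := by
  intro f
  induction f using MvPolynomial.induction_on' with
  | add p q hp hq => simp only [map_add, hp, hq]
  | monomial s a =>
    rcases eq_or_ne i j with rfl | hij
    · rfl
    · simp only [pderiv_monomial, Finsupp.tsub_apply, Finsupp.single_eq_of_ne hij,
        Finsupp.single_eq_of_ne hij.symm, tsub_zero, tsub_right_comm]
      ring_nf

noncomputable def iterPDeriv (L : List σ) (γ : σ → ℕ) (f : MvPolynomial σ R) :
    MvPolynomial σ R :=
  L.foldr (fun i g => (fun h => pderiv i h)^[γ i] g) f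

theorem iterPDeriv_cons (j : σ) (L : List σ) (γ : σ → ℕ) (f : MvPolynomial σ R) :
    iterPDeriv (j :: L) γ f = (fun h => pderiv j h)^[γ j] (iterPDeriv L γ f) := rfl

theorem iterPDeriv_congr (L : List σ) {γ δ : σ → ℕ} (h : ∀ j ∈ L, γ j = δ j)
    (f : MvPolynomial σ R) : iterPDeriv L γ f = iterPDeriv L δ f := by
  induction L with
  | nil => rfl
  | cons j L ih =>
    rw [iterPDeriv_cons, iterPDeriv_cons, ih fun x hx => h x (List.mem_cons_of_mem _ hx),
      h j List.mem_cons_self]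

theorem iterPDeriv_update_succ [DecidableEq σ] {i : σ} {L : List σ} (hi : i ∈ L) (hL : L.Nodup)
    (γ : σ → ℕ) (f : MvPolynomial σ R) :
    iterPDeriv L (Function.update γ i (γ i + 1)) f = pderiv i (iterPDeriv L γ f) := by
  induction L with
  | nil => simp at hi
  | cons j L ih =>
    obtain ⟨hjL, hL⟩ := List.nodup_cons.1 hL
    rw [iterPDeriv_cons, iterPDeriv_cons]
    rcases eq_or_ne j i with rfl | hji
    · rw [iterPDeriv_congr L (fun x hx => Function.update_of_ne (ne_of_mem_of_not_mem hx hjL) _ _),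
        Function.update_self, Function.iterate_succ_apply']
    · rw [Function.update_of_ne hji, ih ((List.mem_cons.1 hi).resolve_left hji.symm) hL,
        ((commute_pderiv i j).iterate_right _) _]

end MvPolynomial

section HasseDerivative

variable {K : Type*} [Field K] {n : ℕ}

theorem nPD_zero (f : MvPolynomial (Fin n) K) : nPD (0 : Fin n →₀ ℕ) f = f := by
  simp [nPD]

theorem nPD_add_single (γ : Fin n →₀ ℕ) (i : Fin n) (f : MvPolynomial (Fin n) K) :
    nPD ⇑(γ + Finsupp.single i 1 : Fin n →₀ ℕ) f =
      ((γ i + 1 : ℕ) : K)⁻¹ • pderiv i (nPD γ f) := by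
  have hγ : ⇑(γ + Finsupp.single i 1 : Fin n →₀ ℕ) = Function.update γ i (γ i + 1) := by
    ext j
    rcases eq_or_ne j i with rfl | hji
    · simp
    · simp [hji]
  have hfact : ∏ j, (Function.update γ i (γ i + 1) j).factorial =
      (γ i + 1) * ∏ j, (γ j).factorial := by
    simp only [Function.apply_update (fun _ => Nat.factorial), Finset.prod_update_of_mem
      (Finset.mem_univ i), ← Finset.mul_prod_erase _ _ (Finset.mem_univ i)]
    rw [Nat.factorial_succ, mul_assoc, Finset.sdiff_singleton_eq_erase]
  change _ • iterPDeriv _ _ f = _ • pderiv i (_ • iterPDeriv _ _ f)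
  rw [hγ, hfact, iterPDeriv_update_succ (List.mem_finRange i) (List.nodup_finRange n),
    Derivation.map_smul, smul_smul, Nat.cast_mul, mul_inv]

theorem pderiv_nPD [CharZero K] (γ : Fin n →₀ ℕ) (i : Fin n) (f : MvPolynomial (Fin n) K) :
    pderiv i (nPD γ f) =
      ((γ i + 1 : ℕ) : K) • nPD ⇑(γ + Finsupp.single i 1 : Fin n →₀ ℕ) f := by
  rw [nPD_add_single, smul_inv_smul₀ (Nat.cast_ne_zero.2 (Nat.succ_ne_zero _))]

noncomputable def lowerHasseSpan (f : MvPolynomial (Fin n) K) (γ : Fin n →₀ ℕ) :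
    Ideal (MvPolynomial (Fin n) K) :=
  Ideal.span ((fun δ : Fin n →₀ ℕ => nPD δ f) '' Set.Iio γ)

theorem nPD_mem_lowerHasseSpan (f : MvPolynomial (Fin n) K) {γ δ : Fin n →₀ ℕ} (h : δ < γ) :
    nPD δ f ∈ lowerHasseSpan f γ :=
  Ideal.subset_span ⟨δ, h, rfl⟩

theorem lowerHasseSpan_mono (f : MvPolynomial (Fin n) K) {γ δ : Fin n →₀ ℕ} (h : δ ≤ γ) :
    lowerHasseSpan f δ ≤ lowerHasseSpan f γ :=
  Ideal.span_mono (Set.image_mono (Set.Iio_subset_Iio h))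

theorem pderiv_mem_lowerHasseSpan_add_single [CharZero K] (f : MvPolynomial (Fin n) K)
    (γ : Fin n →₀ ℕ) (i : Fin n) {x : MvPolynomial (Fin n) K} (hx : x ∈ lowerHasseSpan f γ) :
    pderiv i x ∈ lowerHasseSpan f (γ + Finsupp.single i 1) := by
  induction hx using Submodule.span_induction with
  | mem x hx =>
    obtain ⟨δ, hδ, rfl⟩ := hx
    rw [pderiv_nPD, smul_eq_C_mul]
    exact Ideal.mul_mem_left _ _ (nPD_mem_lowerHasseSpan f (add_lt_add_left hδ _))
  | zero => simp
  | add x y _ _ hx hy => rw [map_add]; exact add_mem hx hy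
  | smul r x hx ihx =>
    rw [smul_eq_mul, pderiv_mul]
    exact add_mem (Ideal.mul_mem_left _ _ (lowerHasseSpan_mono f le_self_add hx))
      (Ideal.mul_mem_left _ _ ihx)

/-- The Leibniz rule, modulo the lower derivatives of the first factor. -/
theorem nPD_mul_sub_mem_lowerHasseSpan [CharZero K] (f g : MvPolynomial (Fin n) K)
    (γ : Fin n →₀ ℕ) : nPD γ (f * g) - nPD γ f * g ∈ lowerHasseSpan f γ := by
  induction γ using Finsupp.induction_add_single_one with
  | zero => rw [nPD_zero, nPD_zero, sub_self]; exact zero_mem _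
  | add_single γ i ih =>
    have hsplit : nPD ⇑(γ + Finsupp.single i 1 : Fin n →₀ ℕ) (f * g) -
        nPD ⇑(γ + Finsupp.single i 1 : Fin n →₀ ℕ) f * g =
        ((γ i + 1 : ℕ) : K)⁻¹ • (pderiv i (nPD γ (f * g) - nPD γ f * g) +
          nPD γ f * pderiv i g) := by
      rw [nPD_add_single, nPD_add_single, map_sub, pderiv_mul, smul_mul_assoc, ← smul_sub]
      ring_nf
    rw [hsplit, smul_eq_C_mul]
    refine Ideal.mul_mem_left _ _ (add_mem (pderiv_mem_lowerHasseSpan_add_single f γ i ih) ?_)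
    have hlt : γ < γ + Finsupp.single i 1 :=
      lt_add_of_pos_right _ (pos_iff_ne_zero.2 (Finsupp.single_ne_zero.2 one_ne_zero))
    exact Ideal.mul_mem_right _ _ (nPD_mem_lowerHasseSpan f hlt)

theorem nPD_mem_of_nPD_mul_mem [CharZero K] {P : Ideal (MvPolynomial (Fin n) K)} [P.IsPrime]
    {f g : MvPolynomial (Fin n) K} (hg : g ∉ P) {γ : Fin n →₀ ℕ}
    (hfg : ∀ δ ≤ γ, nPD δ (f * g) ∈ P) : nPD γ f ∈ P := by
  induction γ using WellFoundedLT.induction with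
  | _ γ ih =>
    have hlower : lowerHasseSpan f γ ≤ P := by
      refine Ideal.span_le.2 ?_
      rintro _ ⟨δ, hδ, rfl⟩
      exact ih δ hδ fun ε hε => hfg ε (hε.trans hδ.le)
    have hmul : nPD γ f * g ∈ P := by
      simpa using sub_mem (hfg γ le_rfl) (hlower (nPD_mul_sub_mem_lowerHasseSpan f g γ))
    exact (Ideal.IsPrime.mem_or_mem ‹_› hmul).resolve_right hg

end HasseDerivative

namespace Ideal

variable {R : Type*} [CommRing R]

theorem not_le_of_radical_eq_isMaximal {I M P : Ideal R} (hM : M.IsMaximal) [P.IsPrime]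
    (hI : I.radical = M) (hMP : M ≠ P) : ¬ I ≤ P := fun hIP =>
  hMP (hM.eq_of_le IsPrime.ne_top' (hI ▸ ‹P.IsPrime›.radical ▸ radical_mono hIP))

theorem exists_notMem_forall_mul_mem_prod {ι : Type*} [Fintype ι] [DecidableEq ι]
    {P : Ideal R} [hP : P.IsPrime] (J : ι → Ideal R) (i : ι) (hJ : ∀ j ≠ i, ¬ J j ≤ P) :
    ∃ g ∉ P, ∀ f ∈ J i, f * g ∈ ∏ j, J j := by
  have hprod : ¬ ∏ j ∈ Finset.univ.erase i, J j ≤ P := by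
    rw [hP.prod_le]
    rintro ⟨j, hj, hjP⟩
    exact hJ j (Finset.ne_of_mem_erase hj) hjP
  obtain ⟨g, hgJ, hgP⟩ := SetLike.not_le_iff_exists.1 hprod
  refine ⟨g, hgP, fun f hf => ?_⟩
  rw [← Finset.mul_prod_erase _ J (Finset.mem_univ i)]
  exact mul_mem_mul hf hgJ

end Ideal

/-- Over the algebraic closure `k̄` of a char-0 field `k`, let
`𝔪₁,…,𝔪_r` be distinct maximal ideals of `k̄[X₁,…,Xₙ]` and `𝔍ᵢ` ideals with
`√𝔍ᵢ = 𝔪ᵢ`. If `Σ` is lower `ℤ≥0`-saturated and `∂_γ(𝔍₁⋯𝔍_r) ⊆ 𝔪₁⋯𝔪_r` for all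
`γ ∈ Σ`, then `∂_γ(𝔍ᵢ) ⊆ 𝔪ᵢ` for all `i` and `γ ∈ Σ`. -/
theorem stmt9 {k : Type*} [Field k] [CharZero k] {n r : ℕ}
    (m J : Fin r → Ideal (MvPolynomial (Fin n) (AlgebraicClosure k)))
    (hmax : ∀ i, (m i).IsMaximal) (hdist : Function.Injective m)
    (hrad : ∀ i, (J i).radical = m i)
    (S : Set (Fin n →₀ ℕ)) (hS : lowerSatF S)
    (hD : ∀ γ ∈ S, ∀ f ∈ ∏ i, J i, nPD ⇑γ f ∈ ∏ i, m i) :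
    ∀ i, ∀ γ ∈ S, ∀ f ∈ J i, nPD ⇑γ f ∈ m i := by
  intro i γ hγ f hf
  have := (hmax i).isPrime
  obtain ⟨g, hg, hfg⟩ := Ideal.exists_notMem_forall_mul_mem_prod J i fun j hji =>
    Ideal.not_le_of_radical_eq_isMaximal (hmax j) (hrad j) (hdist.ne hji)
  refine nPD_mem_of_nPD_mul_mem hg fun δ hδ => ?_
  exact Ideal.prod_le_inf.trans (Finset.inf_le (Finset.mem_univ i))
    (hD δ (hS.2 γ hγ δ hδ) _ (hfg f hf))
end

section
/- Let Δ be a lower saturated subset of ℝ≥0^n, N a positive integer, Δ_N := Δ ∩ [0,N]^n, and for a positive integer m let Σ_{N,m} := Δ ∩ (J_{N,m})^n where J_{N,m} := { j/m : 0 ≤ j ≤ mN }. Set Δ_{N,m} := ⋃_{φ∈Σ_{N,m}} I_φ and Δ'_{N,m} := ⋃_{(a₁,...,aₙ)∈Σ_{N,m}} [a₁,a₁+1/m] × ⋯ × [aₙ,aₙ+1/m]. Then vol(Δ'_{N,m} \ Δ_{N,m}) ≤ n(1+N)^{n−1}/m. -/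
/-!
Write `M = m N`. If a cube `[b/m, (b+1)/m]` of `Δ'_{N,m}` is not covered by `Δ_{N,m}`, then
`(b+1)/m` is not a grid point of `Δ`, since otherwise `I_{(b+1)/m}` would contain the cube. So
the integer points `b` in question lie on the diagonal boundary of the lower set
`{b ∈ [0, M]^n | b/m ∈ Δ}`, which meets every diagonal line `b + t(1, …, 1)` at most once.
Hence there are at most `n (M+1)^{n-1}` of them, one per lattice point of the `n` faces
`{c_i = 0}` of `[0, M]^n`, and each cube has volume `m^{-n}`; finally
`(mN+1)^{n-1} / m^n ≤ (1+N)^{n-1} / m`.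
-/

open MeasureTheory Finset

section DiagonalBoundary

variable {ι : Type*} [Fintype ι]

noncomputable def diagonalBoundary (T : Set (ι → ℕ)) (M : ℕ) : Finset (ι → ℕ) :=
  open scoped Classical in {b ∈ Fintype.piFinset fun _ => Iic M | b ∈ T ∧ b + 1 ∉ T}

variable {T : Set (ι → ℕ)} {M : ℕ}

lemma mem_diagonalBoundary {b : ι → ℕ} :
    b ∈ diagonalBoundary T M ↔ (∀ i, b i ≤ M) ∧ b ∈ T ∧ b + 1 ∉ T := by
  simp [diagonalBoundary]

lemma IsLowerSet.eq_of_mem_diagonalBoundary (hT : IsLowerSet T) {b b' : ι → ℕ} {s t : ℕ}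
    (hb : b ∈ diagonalBoundary T M) (hb' : b' ∈ diagonalBoundary T M)
    (h : ∀ i, b i + s = b' i + t) : b = b' := by
  rw [mem_diagonalBoundary] at hb hb'
  rcases lt_trichotomy s t with hst | rfl | hst
  · exact absurd (hT (fun i => by have := h i; simp; omega) hb.2.1) hb'.2.2
  · exact funext fun i => by have := h i; omega
  · exact absurd (hT (fun i => by have := h i; simp; omega) hb'.2.1) hb.2.2

/-- Subtracting the minimal coordinate maps the boundary injectively into the faces
`{c i = 0}` of the grid `[0, M]^ι`. -/
theorem IsLowerSet.card_diagonalBoundary_le (hT : IsLowerSet T) (M : ℕ) :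
    #(diagonalBoundary T M) ≤ Fintype.card ι * (M + 1) ^ (Fintype.card ι - 1) := by
  classical
  cases isEmpty_or_nonempty ι
  · have : diagonalBoundary T M = ∅ := by
      ext b
      simp only [mem_diagonalBoundary, Subsingleton.elim (b + 1) b]
      tauto
    simp [this]
  let k : (ι → ℕ) → ℕ := fun b => univ.inf' univ_nonempty b
  have hk : ∀ b i, k b ≤ b i := fun b i => inf'_le _ (mem_univ i)
  let faces := univ.biUnion fun i => {c ∈ Fintype.piFinset fun _ : ι => Iic M | c i = 0}
  have hmaps : Set.MapsTo (fun b i => b i - k b) (diagonalBoundary T M) faces := by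
    intro b hb
    obtain ⟨i, -, hi⟩ := exists_mem_eq_inf' univ_nonempty b
    simp only [faces, mem_coe, mem_biUnion, mem_filter, Fintype.mem_piFinset, mem_Iic]
    exact ⟨i, mem_univ i,
      fun j => (Nat.sub_le _ _).trans ((mem_diagonalBoundary.1 hb).1 j), by simp [k, ← hi]⟩
  have hinj : Set.InjOn (fun b i => b i - k b) (diagonalBoundary T M) := by
    intro b hb b' hb' h
    refine hT.eq_of_mem_diagonalBoundary (s := k b') (t := k b) hb hb' fun i => ?_
    have hi : b i - k b = b' i - k b' := congrFun h i
    have := hk b i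
    have := hk b' i
    omega
  calc #(diagonalBoundary T M) ≤ #faces := card_le_card_of_injOn _ hmaps hinj
    _ ≤ ∑ i, #{c ∈ Fintype.piFinset fun _ : ι => Iic M | c i = 0} := card_biUnion_le
    _ = Fintype.card ι * (M + 1) ^ (Fintype.card ι - 1) := by
      simp [Fintype.card_filter_piFinset_const_eq_of_mem _ _ (mem_Iic.2 (Nat.zero_le M))]

end DiagonalBoundary

section Grid

variable {ι : Type*} [Fintype ι]

/-- `Σ_{N,m}` for `M = m N`. -/
def gridPoints (Δ : Set (ι → ℝ)) (m M : ℕ) : Set (ι → ℝ) :=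
  {a | a ∈ Δ ∧ ∀ i, ∃ j : ℕ, j ≤ M ∧ a i = (j : ℝ) / m}

/-- `⋃_{φ ∈ S} I_φ`. -/
def lowerBoxUnion (S : Set (ι → ℝ)) : Set (ι → ℝ) :=
  {ξ | ∃ φ ∈ S, ∀ i, 0 ≤ ξ i ∧ ξ i ≤ φ i}

/-- `⋃_{a ∈ S} [a₁, a₁ + 1/m] × ⋯ × [aₙ, aₙ + 1/m]`. -/
def cubeUnion (S : Set (ι → ℝ)) (m : ℕ) : Set (ι → ℝ) :=
  {ξ | ∃ a ∈ S, ∀ i, a i ≤ ξ i ∧ ξ i ≤ a i + 1 / m}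

def gridIndices (Δ : Set (ι → ℝ)) (m M : ℕ) : Set (ι → ℕ) :=
  {b | (∀ i, b i ≤ M) ∧ (fun i => (b i : ℝ) / m) ∈ Δ}

def gridCube (m : ℕ) (b : ι → ℕ) : Set (ι → ℝ) :=
  Set.Icc (fun i => (b i : ℝ) / m) (fun i => ((b i : ℝ) + 1) / m)

lemma volume_gridCube (m : ℕ) (b : ι → ℕ) :
    volume (gridCube m b) = ENNReal.ofReal (1 / m) ^ Fintype.card ι := by
  simp only [gridCube, Real.volume_Icc_pi, add_div, add_sub_cancel_left, prod_const, card_univ]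

lemma cubeUnion_diff_lowerBoxUnion_subset (Δ : Set (ι → ℝ)) (m M : ℕ) :
    cubeUnion (gridPoints Δ m M) m \ lowerBoxUnion (gridPoints Δ m M) ⊆
      ⋃ b ∈ diagonalBoundary (gridIndices Δ m M) M, gridCube m b := by
  rintro ξ ⟨⟨a, ⟨haΔ, ha⟩, hξ⟩, hξΔ⟩
  choose b hbM hab using ha
  obtain rfl : a = fun i => (b i : ℝ) / m := funext hab
  have hsucc : b + 1 ∉ gridIndices Δ m M := by
    rintro ⟨hM, hΔ⟩
    refine hξΔ ⟨_, ⟨hΔ, fun i => ⟨b i + 1, hM i, by simp⟩⟩, fun i => ⟨?_, ?_⟩⟩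
    · exact (div_nonneg (Nat.cast_nonneg _) (Nat.cast_nonneg _)).trans (hξ i).1
    · simpa [add_div] using (hξ i).2
  refine Set.mem_biUnion (mem_diagonalBoundary.2 ⟨hbM, ⟨hbM, haΔ⟩, hsucc⟩) ⟨fun i => (hξ i).1, ?_⟩
  intro i
  simpa [add_div] using (hξ i).2

end Grid

lemma isLowerSet_gridIndices {n : ℕ} {Δ : Set (Fin n → ℝ)} (hΔ : lowerSat Δ) (m M : ℕ) :
    IsLowerSet (gridIndices Δ m M) := by
  rintro b c hcb ⟨hbM, hbΔ⟩
  refine ⟨fun i => (hcb i).trans (hbM i), hΔ.2 _ hbΔ _ fun i => ⟨by positivity, ?_⟩⟩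
  exact div_le_div_of_nonneg_right (by exact_mod_cast hcb i) (Nat.cast_nonneg _)

lemma mul_pow_mul_one_div_pow_le {n m : ℕ} (hm : 0 < m) (N : ℕ) :
    (n : ℝ) * (m * N + 1) ^ (n - 1) * (1 / m) ^ n ≤ n * (1 + N) ^ (n - 1) / m := by
  rcases n with _ | n
  · simp
  have hm' : (1 : ℝ) ≤ m := by exact_mod_cast hm
  have hbase : ((m : ℝ) * N + 1) / m ≤ 1 + N := by
    rw [div_le_iff₀ (by positivity)]
    nlinarith
  calc ((n + 1 : ℕ) : ℝ) * ((m : ℝ) * N + 1) ^ n * (1 / m) ^ (n + 1)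
      = (n + 1 : ℕ) * (((m : ℝ) * N + 1) / m) ^ n / m := by
        rw [div_pow, div_pow, one_pow, pow_succ]; field_simp
    _ ≤ (n + 1 : ℕ) * (1 + N) ^ n / m := by gcongr

theorem stmt17_general (n : ℕ) (Δ : Set (Fin n → ℝ)) (hΔ : lowerSat Δ)
    (N m : ℕ) (hm : 0 < m) :
    MeasureTheory.volume
      ({ξ : Fin n → ℝ | ∃ a : Fin n → ℝ,
          (a ∈ Δ ∧ ∀ i, ∃ j : ℕ, j ≤ m * N ∧ a i = (j : ℝ) / m) ∧
          ∀ i, a i ≤ ξ i ∧ ξ i ≤ a i + 1 / m} \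
       {ξ : Fin n → ℝ | ∃ φ : Fin n → ℝ,
          (φ ∈ Δ ∧ ∀ i, ∃ j : ℕ, j ≤ m * N ∧ φ i = (j : ℝ) / m) ∧
          ∀ i, 0 ≤ ξ i ∧ ξ i ≤ φ i})
      ≤ ENNReal.ofReal (n * (1 + N) ^ (n - 1) / m) := by
  set B := diagonalBoundary (gridIndices Δ m (m * N)) (m * N)
  have hB : #B ≤ n * (m * N + 1) ^ (n - 1) := by
    simpa using (isLowerSet_gridIndices hΔ m (m * N)).card_diagonalBoundary_le (m * N)
  calc volume (cubeUnion (gridPoints Δ m (m * N)) m \ lowerBoxUnion (gridPoints Δ m (m * N)))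
      ≤ volume (⋃ b ∈ B, gridCube m b) :=
        measure_mono (cubeUnion_diff_lowerBoxUnion_subset Δ m (m * N))
    _ ≤ ∑ b ∈ B, volume (gridCube m b) := measure_biUnion_finset_le _ _
    _ = #B * ENNReal.ofReal (1 / m) ^ n := by simp [volume_gridCube]
    _ ≤ (n * (m * N + 1) ^ (n - 1) : ℕ) * ENNReal.ofReal (1 / m) ^ n := by gcongr
    _ = ENNReal.ofReal (n * (m * N + 1) ^ (n - 1) * (1 / m) ^ n) := by
        rw [← ENNReal.ofReal_pow (by positivity), ← ENNReal.ofReal_natCast,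
          ← ENNReal.ofReal_mul (by positivity)]
        push_cast
        ring
    _ ≤ ENNReal.ofReal (n * (1 + N) ^ (n - 1) / m) :=
        ENNReal.ofReal_le_ofReal (mul_pow_mul_one_div_pow_le hm N)

/-- Let `Δ ⊆ ℝ≥0^n` be lower saturated, `N, m` positive integers,
`Σ_{N,m} = Δ ∩ (J_{N,m})^n` the grid points of `Δ`, `Δ_{N,m} = ⋃_{φ∈Σ_{N,m}} I_φ` and
`Δ'_{N,m} = ⋃_{a∈Σ_{N,m}} [a₁,a₁+1/m] × ⋯ × [aₙ,aₙ+1/m]`. Then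
`vol(Δ'_{N,m} \ Δ_{N,m}) ≤ n(1+N)^{n−1}/m`. -/
theorem stmt17 (n : ℕ) (Δ : Set (Fin n → ℝ)) (hΔ : lowerSat Δ)
    (hΔpos : ∀ ξ ∈ Δ, ∀ i, 0 ≤ ξ i) (N m : ℕ) (hN : 0 < N) (hm : 0 < m) :
    MeasureTheory.volume
      ({ξ : Fin n → ℝ | ∃ a : Fin n → ℝ,
          (a ∈ Δ ∧ ∀ i, ∃ j : ℕ, j ≤ m * N ∧ a i = (j : ℝ) / m) ∧
          ∀ i, a i ≤ ξ i ∧ ξ i ≤ a i + 1 / m} \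
       {ξ : Fin n → ℝ | ∃ φ : Fin n → ℝ,
          (φ ∈ Δ ∧ ∀ i, ∃ j : ℕ, j ≤ m * N ∧ φ i = (j : ℝ) / m) ∧
          ∀ i, 0 ≤ ξ i ∧ ξ i ≤ φ i})
      ≤ ENNReal.ofReal (n * (1 + N) ^ (n - 1) / m) :=
  stmt17_general n Δ hΔ N m hm
end

section
/- Let Σ be a finite lower ℤ≥0-saturated subset of ℤ≥0^n ordered Σ = {γ₁,...,γ_N} with |γᵢ| ≤ |γⱼ| for 1 ≤ j ≤ i ≤ N (i.e., total degrees are nonincreasing along the enumeration). Let 𝔍 be an ideal of A = k[X₁,...,Xₙ] with Σ ∩ ⋃_{f∈𝔍} Supp(f) = ∅. Define 𝔍₀ := 𝔍 and 𝔍ᵢ := 𝔍 + X^{γ₁}A + ⋯ + X^{γᵢ}A. Then 𝔍_{i−1} ⊊ 𝔍ᵢ for every i = 1,...,N; that is, the chain 𝔍 = 𝔍₀ ⊊ 𝔍₁ ⊊ ⋯ ⊊ 𝔍_N is strictly increasing of length N. -/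
/-- Every element of the ideal generated by the monomials `X^{γⱼ}`, `j < i`, has all its
support exponents bounded below by some `γⱼ` with `j < i`. -/
lemma support_span_monomials {k : Type*} [Field k] {n N : ℕ} (γ : Fin N → (Fin n →₀ ℕ))
    (i : Fin N) (p : MvPolynomial (Fin n) k)
    (hp : p ∈ Ideal.span ((fun j : Fin N => MvPolynomial.monomial (γ j) (1 : k)) ''
          {j | (j : ℕ) < (i : ℕ)})) :
    ∀ δ ∈ p.support, ∃ j : Fin N, (j : ℕ) < (i : ℕ) ∧ γ j ≤ δ := by
  classical
  refine Submodule.span_induction ?_ ?_ ?_ ?_ hp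
  · rintro x ⟨j, hj, rfl⟩ δ hδ
    rw [MvPolynomial.support_monomial] at hδ
    simp only [one_ne_zero, if_false, Finset.mem_singleton] at hδ
    exact ⟨j, hj, le_of_eq hδ.symm⟩
  · intro δ hδ; simp at hδ
  · intro x y _ _ hx hy δ hδ
    rcases Finset.mem_union.mp (MvPolynomial.support_add hδ) with h | h
    · exact hx δ h
    · exact hy δ h
  · intro r x _ hx δ hδ
    have := MvPolynomial.support_mul r x hδ
    rw [Finset.mem_add] at this
    obtain ⟨a, ha, b, hb, rfl⟩ := this
    obtain ⟨j, hj, hle⟩ := hx b hb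
    exact ⟨j, hj, hle.trans (by simp [Finsupp.le_def])⟩

/-- Let `Σ = {γ₁,…,γ_N}` be a finite lower `ℤ≥0`-saturated set of
exponents enumerated with nonincreasing total degrees, and `𝔍` an ideal of
`A = k[X₁,…,Xₙ]` whose elements have supports disjoint from `Σ`. Then the chain
`𝔍ᵢ = 𝔍 + X^{γ₁}A + ⋯ + X^{γᵢ}A` is strictly increasing: `𝔍_{i−1} ⊊ 𝔍ᵢ` for all `i`. -/
theorem stmt18 {k : Type*} [Field k] {n N : ℕ} (γ : Fin N → (Fin n →₀ ℕ))
    (hinj : Function.Injective γ) (hsat : lowerSatF (Set.range γ))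
    (hdeg : ∀ i j : Fin N, j ≤ i → ∑ l, γ i l ≤ ∑ l, γ j l)
    (J : Ideal (MvPolynomial (Fin n) k))
    (hdisj : ∀ f ∈ J, ∀ i, γ i ∉ f.support) :
    ∀ i : Fin N,
      (J ⊔ Ideal.span ((fun j : Fin N => MvPolynomial.monomial (γ j) (1 : k)) ''
          {j | (j : ℕ) < (i : ℕ)})) <
      (J ⊔ Ideal.span ((fun j : Fin N => MvPolynomial.monomial (γ j) (1 : k)) ''
          {j | (j : ℕ) < (i : ℕ) + 1})) := by
  intro i
  rw [lt_iff_le_and_ne]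
  constructor
  · exact sup_le_sup_left (Ideal.span_mono (Set.image_mono (fun j hj =>
      Nat.lt_succ_of_lt hj))) J
  · intro heq
    -- X^{γᵢ} is in the RHS
    have hmem : (MvPolynomial.monomial (γ i) (1 : k)) ∈
        (J ⊔ Ideal.span ((fun j : Fin N => MvPolynomial.monomial (γ j) (1 : k)) ''
          {j | (j : ℕ) < (i : ℕ) + 1})) := by
      apply Ideal.mem_sup_right
      exact Ideal.subset_span ⟨i, Nat.lt_succ_self _, rfl⟩
    rw [← heq] at hmem
    obtain ⟨f, hf, p, hp, hfp⟩ := Submodule.mem_sup.mp hmem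
    -- take coefficient at γ i
    have hcoef := congrArg (MvPolynomial.coeff (γ i)) hfp
    rw [MvPolynomial.coeff_add, MvPolynomial.coeff_monomial, if_pos rfl] at hcoef
    have hfc : MvPolynomial.coeff (γ i) f = 0 :=
      MvPolynomial.notMem_support_iff.mp (hdisj f hf i)
    have hpc : MvPolynomial.coeff (γ i) p = 0 := by
      by_contra hne
      obtain ⟨j, hj, hle⟩ := support_span_monomials γ i p hp (γ i)
        (MvPolynomial.mem_support_iff.mpr hne)
      -- γ j ≤ γ i pointwise and |γ i| ≤ |γ j| force γ j = γ i, contradicting injectivity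
      have hsum : ∑ l, γ j l ≤ ∑ l, γ i l :=
        Finset.sum_le_sum (fun l _ => hle l)
      have hsum' : ∑ l, γ i l ≤ ∑ l, γ j l := hdeg i j (le_of_lt (Fin.lt_def.mpr hj))
      have heqγ : γ j = γ i := by
        ext l
        exact (Finset.sum_eq_sum_iff_of_le (fun l _ => hle l)).mp
          (le_antisymm hsum hsum') l (Finset.mem_univ l)
      exact absurd (hinj heqγ) (Fin.ne_of_lt (Fin.lt_def.mpr hj))
    rw [hfc, hpc] at hcoef
    simp at hcoef
end
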